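/- arXiv:1608.05887 — 2 statements merged into one kernel-verified Lean document; each statement's English description precedes it below -/
import Mathlib

section
/- For every l ≥ 4, the polynomial f_{D_l} satisfies the third-order Fuchsian ODE t(t-1)(2t-1)·y''' + ((l+6)(t²−t)+2)·y'' − l(l−1)(2t−1)·y' − l(l−1)(l+2)·y = 0, where derivatives are formal derivatives in ℚ[t] and f_{D_l}(t) = Σ_{k=0}^{l} (-1)^k (C(l,k)·C(l+k-1,k) + C(l-2,k-2)·C(l+k-2,k))·t^k. -/
/-!
Comparing coefficients of `t ^ n` turns the equation into the three-term recurrence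
`(n - l)(2n + l + 2)(n + l - 1) a_n - (n + 1)(3n² + (l + 3)n - l(l - 1)) a_{n+1}
  + (n + 1)(n + 2)² a_{n+2} = 0`
for the coefficients `a_k = (-1)^k (b_k + c_k)` of `f_{D_l}`, where
`b_k = C(l,k) C(l+k-1,k)` and `c_k = C(l-2,k-2) C(l+k-2,k)`. Both parts are hypergeometric:
`(k + 1)² b_{k+1} = (l - k)(l + k) b_k` and `l (l + k - 1) c_k = k (k - 1) b_k`, so every term
of the recurrence is a rational multiple of `b_n`, and the recurrence becomes an identity of
rational functions in `n` and `l`.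
-/
open Polynomial Finset

noncomputable def fD (l : ℕ) : Polynomial ℚ :=
  ∑ k ∈ Finset.range (l + 1),
    Polynomial.C ((-1 : ℚ) ^ k *
      ((l.choose k * (l + k - 1).choose k
        + if 2 ≤ k then (l - 2).choose (k - 2) * (l + k - 2).choose k else 0 : ℕ) : ℚ)) *
      Polynomial.X ^ k

theorem coeff_X_pow_mul_iterate_derivative {R : Type*} [Semiring R] (p : R[X]) (j i n : ℕ) :
    (X ^ j * derivative^[j + i] p).coeff n = (n + i).descFactorial (j + i) • p.coeff (n + i) := by
  rw [coeff_X_pow_mul', coeff_iterate_derivative]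
  split_ifs with hjn
  · rw [show n - j + (j + i) = n + i by omega]
  · rw [Nat.descFactorial_eq_zero_iff_lt.mpr (by omega), zero_smul]

def fuchsianRecurrence {R : Type*} [CommRing R] (l : R) (a : ℕ → R) (n : ℕ) : R :=
  (n - l) * (2 * n + l + 2) * (n + l - 1) * a n
    - (n + 1) * (3 * n ^ 2 + (l + 3) * n - l * (l - 1)) * a (n + 1)
    + (n + 1) * (n + 2) ^ 2 * a (n + 2)

theorem coeff_fuchsianOperator {R : Type*} [CommRing R] (l : R) (y : R[X]) (n : ℕ) :
    (X * (X - 1) * (2 * X - 1) * derivative^[3] y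
      + (C (l + 6) * (X ^ 2 - X) + 2) * derivative^[2] y
      - C (l * (l - 1)) * (2 * X - 1) * derivative y
      - C (l * (l - 1) * (l + 2)) * y).coeff n = fuchsianRecurrence l y.coeff n := by
  -- each term in the form `X ^ j * derivative^[j + i] y` of `coeff_X_pow_mul_iterate_derivative`
  have hexpand : X * (X - 1) * (2 * X - 1) * derivative^[3] y
      + (C (l + 6) * (X ^ 2 - X) + 2) * derivative^[2] y
      - C (l * (l - 1)) * (2 * X - 1) * derivative y
      - C (l * (l - 1) * (l + 2)) * y
      = C 2 * (X ^ 3 * derivative^[3 + 0] y) - C 3 * (X ^ 2 * derivative^[2 + 1] y)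
        + X ^ 1 * derivative^[1 + 2] y + C (l + 6) * (X ^ 2 * derivative^[2 + 0] y)
        - C (l + 6) * (X ^ 1 * derivative^[1 + 1] y) + C 2 * (X ^ 0 * derivative^[0 + 2] y)
        - C (2 * l * (l - 1)) * (X ^ 1 * derivative^[1 + 0] y)
        + C (l * (l - 1)) * (X ^ 0 * derivative^[0 + 1] y)
        - C (l * (l - 1) * (l + 2)) * (X ^ 0 * derivative^[0 + 0] y) := by
    simp only [Nat.reduceAdd, Function.iterate_one, Function.iterate_zero, id, map_mul, map_sub,
      map_add, map_ofNat, map_one]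
    ring
  rw [hexpand]
  -- falling factorials as `descPochhammer`, to cast them without truncated subtraction
  simp only [coeff_add, coeff_sub, coeff_C_mul, coeff_X_pow_mul_iterate_derivative, nsmul_eq_mul,
    ← descPochhammer_eval_eq_descFactorial]
  simp only [add_zero, descPochhammer_succ_right, descPochhammer_zero, Nat.cast_zero, sub_zero,
    one_mul, Nat.cast_one, Nat.cast_ofNat, eval_mul, eval_X, eval_sub, eval_one, eval_ofNat,
    Nat.cast_add, Nat.reduceAdd, add_sub_cancel_right, zero_add]
  rw [fuchsianRecurrence]
  ring

theorem fuchsianRecurrence_eq_zero {L : ℚ} (hL : 1 < L) {b c : ℕ → ℚ}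
    (hb : ∀ m : ℕ, ((m : ℚ) + 1) ^ 2 * b (m + 1) = (L - m) * (L + m) * b m)
    (hc : ∀ m : ℕ, L * (L + m - 1) * c m = m * (m - 1) * b m) (m : ℕ) :
    fuchsianRecurrence L (fun k ↦ (-1) ^ k * (b k + c k)) m = 0 := by
  have hLk : ∀ k : ℕ, 0 < L + k - 1 := fun k ↦ by linarith [k.cast_nonneg (α := ℚ)]
  have hc' : ∀ k : ℕ, c k = k * (k - 1) / (L * (L + k - 1)) * b k := fun k ↦ by
    rw [div_mul_eq_mul_div, eq_div_iff (mul_pos (by linarith) (hLk k)).ne', ← hc]; ring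
  have hb' : ∀ k : ℕ, b (k + 1) = (L - k) * (L + k) / (k + 1) ^ 2 * b k := fun k ↦ by
    rw [div_mul_eq_mul_div, eq_div_iff (by positivity), ← hb]; ring
  -- the denominators that `field_simp` clears
  have hpos₀ := hLk m
  have hpos₁ := hLk (m + 1)
  have hpos₂ := hLk (m + 2)
  push_cast at hpos₁ hpos₂
  simp only [fuchsianRecurrence, hc', hb' (m + 1), hb' m]
  push_cast
  field_simp
  ring

theorem cast_add_one_mul_choose {R : Type*} [Ring R] (n k : ℕ) :
    ((k : R) + 1) * n.choose (k + 1) = (n - k) * n.choose k := by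
  rcases le_or_gt k n with h | h
  · have := Nat.choose_succ_right_eq n k
    rw [mul_comm, mul_comm (n.choose k)] at this
    rw [← Nat.cast_sub h]
    exact_mod_cast congrArg (Nat.cast : ℕ → R) this
  · simp [Nat.choose_eq_zero_of_lt h, Nat.choose_eq_zero_of_lt (h.trans k.lt_succ_self)]

def chooseProd (l k : ℕ) : ℕ := l.choose k * (l + k - 1).choose k

def chooseCorr (l k : ℕ) : ℕ :=
  if 2 ≤ k then (l - 2).choose (k - 2) * (l + k - 2).choose k else 0

theorem chooseProd_succ {l : ℕ} (hl : 1 ≤ l) (m : ℕ) :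
    ((m : ℚ) + 1) ^ 2 * chooseProd l (m + 1) = (l - m) * (l + m) * chooseProd l m := by
  obtain ⟨n, rfl⟩ := Nat.exists_eq_add_of_le' hl
  have h₁ := cast_add_one_mul_choose (R := ℚ) (n + 1) m
  have h₂ : ((n + m + 1 : ℕ) : ℚ) * (n + m).choose m = (n + m + 1).choose (m + 1) * (m + 1) := by
    exact_mod_cast Nat.add_one_mul_choose_eq (n + m) m
  simp only [chooseProd, show n + 1 + (m + 1) - 1 = n + m + 1 by omega,
    show n + 1 + m - 1 = n + m by omega, Nat.cast_mul]
  push_cast at h₁ h₂ ⊢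
  linear_combination ((m : ℚ) + 1) * ((n + m + 1).choose (m + 1) : ℚ) * h₁
    - ((n : ℚ) + 1 - m) * ((n + 1).choose m : ℚ) * h₂

theorem chooseCorr_eq {l : ℕ} (hl : 2 ≤ l) (m : ℕ) :
    (l : ℚ) * (l + m - 1) * chooseCorr l m = m * (m - 1) * chooseProd l m := by
  obtain ⟨n, rfl⟩ := Nat.exists_eq_add_of_le' hl
  rcases lt_or_ge m 2 with hm | hm
  · interval_cases m <;> simp [chooseCorr]
  obtain ⟨k, rfl⟩ := Nat.exists_eq_add_of_le' hm
  have h₁ : ((n + 1 : ℕ) : ℚ) * n.choose k = (n + 1).choose (k + 1) * (k + 1) := by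
    exact_mod_cast Nat.add_one_mul_choose_eq n k
  have h₂ : ((n + 2 : ℕ) : ℚ) * (n + 1).choose (k + 1) = (n + 2).choose (k + 2) * (k + 2) := by
    exact_mod_cast Nat.add_one_mul_choose_eq (n + 1) (k + 1)
  have h₃ : ((n + k + 2).choose (k + 2) : ℚ) * (n + k + 3)
      = (n + k + 3).choose (k + 2) * (n + 1) := by
    have := Nat.choose_mul_succ_eq (n + k + 2) (k + 2)
    rw [show n + k + 2 + 1 - (k + 2) = n + 1 by omega] at this
    exact_mod_cast this
  simp only [chooseCorr, chooseProd, le_add_iff_nonneg_left, zero_le, if_true,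
    show n + 2 - 2 = n by omega, show k + 2 - 2 = k by omega,
    show n + 2 + (k + 2) - 2 = n + k + 2 by omega,
    show n + 2 + (k + 2) - 1 = n + k + 3 by omega, Nat.cast_mul]
  push_cast at h₁ h₂ ⊢
  linear_combination ((n : ℚ) + 2) * n.choose k * h₃
    + ((n + k + 3).choose (k + 2) : ℚ) * ((n : ℚ) + 2) * h₁
    + ((n + k + 3).choose (k + 2) : ℚ) * ((k : ℚ) + 1) * h₂

theorem coeff_fD {l : ℕ} (hl : 2 ≤ l) (k : ℕ) :
    (fD l).coeff k = (-1) ^ k * ((chooseProd l k : ℚ) + chooseCorr l k) := by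
  rw [fD, finsetSum_coeff]
  simp only [coeff_C_mul, coeff_X_pow, mul_ite, mul_one, mul_zero, sum_ite_eq, mem_range]
  by_cases hk : k < l + 1
  · rw [if_pos hk, chooseProd, chooseCorr, Nat.cast_add]
  · have hchoose : l.choose k = 0 := Nat.choose_eq_zero_of_lt (by omega)
    have hchoose' : (l - 2).choose (k - 2) = 0 := Nat.choose_eq_zero_of_lt (by omega)
    simp [hk, chooseProd, chooseCorr, hchoose, hchoose']

theorem fD_fuchsian_ode (l : ℕ) (hl : 4 ≤ l) :
    Polynomial.X * (Polynomial.X - 1) * (2 * Polynomial.X - 1) *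
        (Polynomial.derivative^[3] (fD l))
      + (Polynomial.C ((l : ℚ) + 6) * (Polynomial.X ^ 2 - Polynomial.X) + 2) *
        (Polynomial.derivative^[2] (fD l))
      - Polynomial.C ((l : ℚ) * ((l : ℚ) - 1)) * (2 * Polynomial.X - 1) *
        (Polynomial.derivative (fD l))
      - Polynomial.C ((l : ℚ) * ((l : ℚ) - 1) * ((l : ℚ) + 2)) * fD l = 0 := by
  have hl₂ : 2 ≤ l := by omega
  ext n
  rw [coeff_fuchsianOperator, coeff_zero, funext (coeff_fD hl₂)]
  exact fuchsianRecurrence_eq_zero (by exact_mod_cast hl₂) (chooseProd_succ (by omega))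
    (chooseCorr_eq hl₂) n
end

section
/- For every l ≥ 5, the identity f⁺_{D_l}(t) = (1/(2(l-1)))·(l·t − 2)·f_{B_l}(t) + (1/(2(l-1)))·(2(2l−1)t² − 5l·t + 2l)·f_{B_{l-1}}(t) holds in ℚ[t], where f_{B_l}(t) = Σ_{k=0}^{l} (-1)^k C(l,k)·C(l+k,k)·t^k, and f⁺_{D_l} is the f⁺-polynomial of type D_l determined by f⁺_{D_l}(t) = ((l-2)/(2l-1))·f⁺_{B_l}(t) + ((l+1)/(2l-1) − t)·f⁺_{B_{l-1}}(t) with f⁺_{B_m}(t) = Σ_{k=0}^{m} (-1)^k C(m,k)·C(m+k-1,k)·t^k. -/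
open Polynomial Finset

noncomputable def fB (l : ℕ) : Polynomial ℚ :=
  ∑ k ∈ Finset.range (l + 1),
    Polynomial.C ((-1 : ℚ) ^ k * (l.choose k) * ((l + k).choose k)) * Polynomial.X ^ k

noncomputable def fBplus (m : ℕ) : Polynomial ℚ :=
  ∑ k ∈ Finset.range (m + 1),
    Polynomial.C ((-1 : ℚ) ^ k * (m.choose k) * ((m + k - 1).choose k)) * Polynomial.X ^ k

noncomputable def fDplus (l : ℕ) : Polynomial ℚ :=
  Polynomial.C (((l : ℚ) - 2) / (2 * (l : ℚ) - 1)) * fBplus l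
    + (Polynomial.C (((l : ℚ) + 1) / (2 * (l : ℚ) - 1)) - Polynomial.X) * fBplus (l - 1)


lemma coeff_fB (l n : ℕ) :
    (fB l).coeff n = (-1:ℚ)^n * (l.choose n) * ((l+n).choose n) := by
  rw [fB, Polynomial.finset_sum_coeff]
  simp only [Polynomial.coeff_C_mul, Polynomial.coeff_X_pow, mul_ite, mul_one, mul_zero]
  rw [Finset.sum_ite_eq (Finset.range (l+1)) n]
  by_cases h : n ∈ Finset.range (l+1)
  · simp [h]
  · simp only [h, if_false]
    rw [Nat.choose_eq_zero_of_lt (by simp at h; omega : l < n)]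
    ring

lemma coeff_fBplus (m n : ℕ) :
    (fBplus m).coeff n = (-1:ℚ)^n * (m.choose n) * ((m+n-1).choose n) := by
  rw [fBplus, Polynomial.finset_sum_coeff]
  simp only [Polynomial.coeff_C_mul, Polynomial.coeff_X_pow, mul_ite, mul_one, mul_zero]
  rw [Finset.sum_ite_eq (Finset.range (m+1)) n]
  by_cases h : n ∈ Finset.range (m+1)
  · simp [h]
  · simp only [h, if_false]
    rw [Nat.choose_eq_zero_of_lt (by simp at h; omega : m < n)]
    ring

set_option maxHeartbeats 1000000 in
lemma key_gen (k j : ℕ) :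
    (((k:ℚ)+j+3) - 2) / (2*((k:ℚ)+j+3) - 1) * ((-1:ℚ)^(k+2) * ((k+j+3).choose (k+2)) * ((2*k+j+4).choose (k+2)))
  + (((k:ℚ)+j+3) + 1) / (2*((k:ℚ)+j+3) - 1) * ((-1:ℚ)^(k+2) * ((k+j+2).choose (k+2)) * ((2*k+j+3).choose (k+2)))
  - (-1:ℚ)^(k+1) * ((k+j+2).choose (k+1)) * ((2*k+j+2).choose (k+1))
  = 1 / (2*(((k:ℚ)+j+3) - 1)) * (((k:ℚ)+j+3) * ((-1:ℚ)^(k+1) * ((k+j+3).choose (k+1)) * ((2*k+j+4).choose (k+1))))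
  - 1 / (2*(((k:ℚ)+j+3) - 1)) * (2 * ((-1:ℚ)^(k+2) * ((k+j+3).choose (k+2)) * ((2*k+j+5).choose (k+2))))
  + 1 / (2*(((k:ℚ)+j+3) - 1)) * (2 * ((2*((k:ℚ)+j+3) - 1) * ((-1:ℚ)^k * ((k+j+2).choose k) * ((2*k+j+2).choose k))))
  - 1 / (2*(((k:ℚ)+j+3) - 1)) * (5 * (((k:ℚ)+j+3) * ((-1:ℚ)^(k+1) * ((k+j+2).choose (k+1)) * ((2*k+j+3).choose (k+1)))))
  + 1 / (2*(((k:ℚ)+j+3) - 1)) * (2 * (((k:ℚ)+j+3) * ((-1:ℚ)^(k+2) * ((k+j+2).choose (k+2)) * ((2*k+j+4).choose (k+2))))) := by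
  have n1 : (k:ℚ)+1 ≠ 0 := by positivity
  have hk0 : (0:ℚ) ≤ (k:ℚ) := Nat.cast_nonneg k
  have hj0 : (0:ℚ) ≤ (j:ℚ) := Nat.cast_nonneg j
  have n10 : 2*((k:ℚ)+j+3) - 1 ≠ 0 := by intro h; linarith
  have n11 : ((k:ℚ)+j+3) - 1 ≠ 0 := by intro h; linarith
  have n2 : (k:ℚ)+2 ≠ 0 := by positivity
  have n3 : (j:ℚ)+1 ≠ 0 := by positivity
  have n4 : (j:ℚ)+2 ≠ 0 := by positivity
  have n5 : (k:ℚ)+j+2 ≠ 0 := by positivity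
  have n6 : (k:ℚ)+j+3 ≠ 0 := by positivity
  have nk : ((k.factorial : ℚ)) ≠ 0 := by exact_mod_cast k.factorial_ne_zero
  have nj : ((j.factorial : ℚ)) ≠ 0 := by exact_mod_cast j.factorial_ne_zero
  have nkj1 : (((k+j+1).factorial : ℚ)) ≠ 0 := by exact_mod_cast (k+j+1).factorial_ne_zero
  have nkj2 : (((k+j+2).factorial : ℚ)) ≠ 0 := by exact_mod_cast (k+j+2).factorial_ne_zero
  have nB : (((2*k+j+2).factorial : ℚ)) ≠ 0 := by exact_mod_cast (2*k+j+2).factorial_ne_zero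
  have Fk2 : (((k+2).factorial : ℚ)) = (k+2)*((k+1)*(k.factorial)) := by
    rw [show k+2 = (k+1)+1 from rfl, Nat.factorial_succ, Nat.factorial_succ]; push_cast; ring
  have Fk1 : (((k+1).factorial : ℚ)) = (k+1)*(k.factorial) := by
    rw [Nat.factorial_succ]; push_cast; ring
  have Fj2 : (((j+2).factorial : ℚ)) = (j+2)*((j+1)*(j.factorial)) := by
    rw [show j+2 = (j+1)+1 from rfl, Nat.factorial_succ, Nat.factorial_succ]; push_cast; ring
  have Fj1 : (((j+1).factorial : ℚ)) = (j+1)*(j.factorial) := by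
    rw [Nat.factorial_succ]; push_cast; ring
  have Fkj3 : (((k+j+3).factorial : ℚ)) = (k+j+3)*((k+j+2).factorial) := by
    rw [show k+j+3 = (k+j+2)+1 from rfl, Nat.factorial_succ]; push_cast; ring
  have Fkj2 : (((k+j+2).factorial : ℚ)) = (k+j+2)*((k+j+1).factorial) := by
    rw [show k+j+2 = (k+j+1)+1 from rfl, Nat.factorial_succ]; push_cast; ring
  have F5 : (((2*k+j+5).factorial : ℚ)) = (2*k+j+5)*((2*k+j+4)*((2*k+j+3)*((2*k+j+2).factorial))) := by
    rw [show 2*k+j+5 = (2*k+j+4)+1 from rfl, Nat.factorial_succ,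
        show 2*k+j+4 = (2*k+j+3)+1 from rfl, Nat.factorial_succ,
        show 2*k+j+3 = (2*k+j+2)+1 from rfl, Nat.factorial_succ]; push_cast; ring
  have F4 : (((2*k+j+4).factorial : ℚ)) = (2*k+j+4)*((2*k+j+3)*((2*k+j+2).factorial)) := by
    rw [show 2*k+j+4 = (2*k+j+3)+1 from rfl, Nat.factorial_succ,
        show 2*k+j+3 = (2*k+j+2)+1 from rfl, Nat.factorial_succ]; push_cast; ring
  have F3 : (((2*k+j+3).factorial : ℚ)) = (2*k+j+3)*((2*k+j+2).factorial) := by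
    rw [show 2*k+j+3 = (2*k+j+2)+1 from rfl, Nat.factorial_succ]; push_cast; ring
  -- base binomials
  set c : ℚ := ((k+j+2).choose k : ℚ) with hc
  set d : ℚ := ((2*k+j+2).choose k : ℚ) with hd
  have hc' : c = ((k+j+2).factorial : ℚ) / ((k.factorial : ℚ) * ((j+2).factorial : ℚ)) := by
    rw [hc, Nat.cast_choose ℚ (show k ≤ k+j+2 by omega), show k+j+2-k = j+2 by omega]
  have hd' : d = ((2*k+j+2).factorial : ℚ) / ((k.factorial : ℚ) * ((k+j+2).factorial : ℚ)) := by
    rw [hd, Nat.cast_choose ℚ (show k ≤ 2*k+j+2 by omega), show 2*k+j+2-k = k+j+2 by omega]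
  have R1 : (((k+j+3).choose (k+2) : ℚ)) = c * (((k:ℚ)+j+3)*((j:ℚ)+2)) / (((k:ℚ)+1)*((k:ℚ)+2)) := by
    rw [Nat.cast_choose ℚ (show k+2 ≤ k+j+3 by omega), show k+j+3-(k+2) = j+1 by omega,
      hc', Fkj3, Fk2, Fj2, Fj1]
    field_simp
  have R2 : (((2*k+j+4).choose (k+2) : ℚ)) = d * ((2*(k:ℚ)+j+3)*(2*(k:ℚ)+j+4)) / (((k:ℚ)+1)*((k:ℚ)+2)) := by
    rw [Nat.cast_choose ℚ (show k+2 ≤ 2*k+j+4 by omega), show 2*k+j+4-(k+2) = k+j+2 by omega,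
      hd', F4, Fk2]
    field_simp
  have R3 : (((k+j+2).choose (k+2) : ℚ)) = c * (((j:ℚ)+1)*((j:ℚ)+2)) / (((k:ℚ)+1)*((k:ℚ)+2)) := by
    rw [Nat.cast_choose ℚ (show k+2 ≤ k+j+2 by omega), show k+j+2-(k+2) = j by omega,
      hc', Fk2, Fj2]
    field_simp
  have R4 : (((2*k+j+3).choose (k+2) : ℚ)) = d * ((2*(k:ℚ)+j+3)*((k:ℚ)+j+2)) / (((k:ℚ)+1)*((k:ℚ)+2)) := by
    rw [Nat.cast_choose ℚ (show k+2 ≤ 2*k+j+3 by omega), show 2*k+j+3-(k+2) = k+j+1 by omega,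
      hd', F3, Fk2, Fkj2]
    field_simp
  have R5 : (((k+j+2).choose (k+1) : ℚ)) = c * ((j:ℚ)+2) / ((k:ℚ)+1) := by
    rw [Nat.cast_choose ℚ (show k+1 ≤ k+j+2 by omega), show k+j+2-(k+1) = j+1 by omega,
      hc', Fk1, Fj2, Fj1]
    field_simp
  have R6 : (((2*k+j+2).choose (k+1) : ℚ)) = d * ((k:ℚ)+j+2) / ((k:ℚ)+1) := by
    rw [Nat.cast_choose ℚ (show k+1 ≤ 2*k+j+2 by omega), show 2*k+j+2-(k+1) = k+j+1 by omega,
      hd', Fk1, Fkj2]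
    field_simp
  have R7 : (((k+j+3).choose (k+1) : ℚ)) = c * ((k:ℚ)+j+3) / ((k:ℚ)+1) := by
    rw [Nat.cast_choose ℚ (show k+1 ≤ k+j+3 by omega), show k+j+3-(k+1) = j+2 by omega,
      hc', Fkj3, Fk1]
    field_simp
  have R8 : (((2*k+j+4).choose (k+1) : ℚ)) = d * ((2*(k:ℚ)+j+3)*(2*(k:ℚ)+j+4)) / (((k:ℚ)+1)*((k:ℚ)+j+3)) := by
    rw [Nat.cast_choose ℚ (show k+1 ≤ 2*k+j+4 by omega), show 2*k+j+4-(k+1) = k+j+3 by omega,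
      hd', F4, Fk1, Fkj3]
    field_simp
  have R9 : (((2*k+j+5).choose (k+2) : ℚ)) = d * ((2*(k:ℚ)+j+3)*(2*(k:ℚ)+j+4)*(2*(k:ℚ)+j+5)) / (((k:ℚ)+1)*((k:ℚ)+2)*((k:ℚ)+j+3)) := by
    rw [Nat.cast_choose ℚ (show k+2 ≤ 2*k+j+5 by omega), show 2*k+j+5-(k+2) = k+j+3 by omega,
      hd', F5, Fk2, Fkj3]
    field_simp
  have R12 : (((2*k+j+3).choose (k+1) : ℚ)) = d * (2*(k:ℚ)+j+3) / ((k:ℚ)+1) := by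
    rw [Nat.cast_choose ℚ (show k+1 ≤ 2*k+j+3 by omega), show 2*k+j+3-(k+1) = k+j+2 by omega,
      hd', F3, Fk1]
    field_simp
  rw [R1, R2, R3, R4, R5, R6, R7, R8, R9, R12]
  have n10' : ((k:ℚ)+j+3)*2 - 1 ≠ 0 := by intro h; linarith
  field_simp
  ring

set_option maxHeartbeats 1000000 in
lemma key_l (k : ℕ) :
    (((k:ℚ)+2) - 2) / (2*((k:ℚ)+2) - 1) * ((-1:ℚ)^(k+2) * ((k+2).choose (k+2)) * ((2*k+3).choose (k+2)))
  + (((k:ℚ)+2) + 1) / (2*((k:ℚ)+2) - 1) * ((-1:ℚ)^(k+2) * ((k+1).choose (k+2)) * ((2*k+2).choose (k+2)))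
  - (-1:ℚ)^(k+1) * ((k+1).choose (k+1)) * ((2*k+1).choose (k+1))
  = 1 / (2*(((k:ℚ)+2) - 1)) * (((k:ℚ)+2) * ((-1:ℚ)^(k+1) * ((k+2).choose (k+1)) * ((2*k+3).choose (k+1))))
  - 1 / (2*(((k:ℚ)+2) - 1)) * (2 * ((-1:ℚ)^(k+2) * ((k+2).choose (k+2)) * ((2*k+4).choose (k+2))))
  + 1 / (2*(((k:ℚ)+2) - 1)) * (2 * ((2*((k:ℚ)+2) - 1) * ((-1:ℚ)^k * ((k+1).choose k) * ((2*k+1).choose k))))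
  - 1 / (2*(((k:ℚ)+2) - 1)) * (5 * (((k:ℚ)+2) * ((-1:ℚ)^(k+1) * ((k+1).choose (k+1)) * ((2*k+2).choose (k+1)))))
  + 1 / (2*(((k:ℚ)+2) - 1)) * (2 * (((k:ℚ)+2) * ((-1:ℚ)^(k+2) * ((k+1).choose (k+2)) * ((2*k+3).choose (k+2))))) := by
  have hk0 : (0:ℚ) ≤ (k:ℚ) := Nat.cast_nonneg k
  have n1 : (k:ℚ)+1 ≠ 0 := by positivity
  have n2 : (k:ℚ)+2 ≠ 0 := by positivity
  have n10 : 2*((k:ℚ)+2) - 1 ≠ 0 := by intro h; linarith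
  have n11 : ((k:ℚ)+2) - 1 ≠ 0 := by intro h; linarith
  have nk : ((k.factorial : ℚ)) ≠ 0 := by exact_mod_cast k.factorial_ne_zero
  have nB : (((2*k+1).factorial : ℚ)) ≠ 0 := by exact_mod_cast (2*k+1).factorial_ne_zero
  have Fk2 : (((k+2).factorial : ℚ)) = (k+2)*((k+1)*(k.factorial)) := by
    rw [show k+2 = (k+1)+1 from rfl, Nat.factorial_succ, Nat.factorial_succ]; push_cast; ring
  have Fk1 : (((k+1).factorial : ℚ)) = (k+1)*(k.factorial) := by
    rw [Nat.factorial_succ]; push_cast; ring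
  have F4 : (((2*k+4).factorial : ℚ)) = (2*k+4)*((2*k+3)*((2*k+2)*((2*k+1).factorial))) := by
    rw [show 2*k+4 = (2*k+3)+1 from rfl, Nat.factorial_succ,
        show 2*k+3 = (2*k+2)+1 from rfl, Nat.factorial_succ,
        show 2*k+2 = (2*k+1)+1 from rfl, Nat.factorial_succ]; push_cast; ring
  have F3 : (((2*k+3).factorial : ℚ)) = (2*k+3)*((2*k+2)*((2*k+1).factorial)) := by
    rw [show 2*k+3 = (2*k+2)+1 from rfl, Nat.factorial_succ,
        show 2*k+2 = (2*k+1)+1 from rfl, Nat.factorial_succ]; push_cast; ring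
  have F2 : (((2*k+2).factorial : ℚ)) = (2*k+2)*((2*k+1).factorial) := by
    rw [show 2*k+2 = (2*k+1)+1 from rfl, Nat.factorial_succ]; push_cast; ring
  rw [show ((k+1).choose (k+2)) = 0 from Nat.choose_eq_zero_of_lt (by omega)]
  rw [Nat.cast_choose ℚ (show k+2 ≤ 2*k+3 by omega), show 2*k+3-(k+2) = k+1 by omega,
      Nat.cast_choose ℚ (show k+1 ≤ 2*k+1 by omega), show 2*k+1-(k+1) = k by omega,
      Nat.cast_choose ℚ (show k+1 ≤ 2*k+3 by omega), show 2*k+3-(k+1) = k+2 by omega,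
      Nat.cast_choose ℚ (show k+2 ≤ 2*k+4 by omega), show 2*k+4-(k+2) = k+2 by omega,
      Nat.cast_choose ℚ (show k ≤ 2*k+1 by omega), show 2*k+1-k = k+1 by omega,
      Nat.cast_choose ℚ (show k+1 ≤ 2*k+2 by omega), show 2*k+2-(k+1) = k+1 by omega,
      Nat.cast_choose ℚ (show k+1 ≤ k+2 by omega), show k+2-(k+1) = 1 by omega,
      Nat.choose_self, Nat.choose_self,
      Nat.cast_choose ℚ (show k ≤ k+1 by omega), show k+1-k = 1 by omega]
  rw [F4, F3, F2, Fk2, Fk1, Nat.factorial_one]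
  push_cast
  field_simp
  ring

set_option maxHeartbeats 2000000 in
theorem fDplus_eq_comb_fB (l : ℕ) (hl : 5 ≤ l) :
    fDplus l
      = Polynomial.C (1 / (2 * ((l : ℚ) - 1))) *
          (Polynomial.C (l : ℚ) * Polynomial.X - 2) * fB l
        + Polynomial.C (1 / (2 * ((l : ℚ) - 1))) *
          (Polynomial.C (2 * (2 * (l : ℚ) - 1)) * Polynomial.X ^ 2
            - Polynomial.C (5 * (l : ℚ)) * Polynomial.X + Polynomial.C (2 * (l : ℚ))) *
          fB (l - 1) := by
  have h2 : (2 : Polynomial ℚ) = Polynomial.C (2:ℚ) := (map_ofNat Polynomial.C 2).symm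
  have h5 : (5:ℚ) ≤ (l:ℚ) := by exact_mod_cast hl
  have d1 : 2*(l:ℚ) - 1 ≠ 0 := by intro h; linarith
  have d2 : 2*((l:ℚ) - 1) ≠ 0 := by intro h; linarith
  rw [fDplus, h2]
  rw [show Polynomial.C (((l : ℚ) - 2) / (2 * (l : ℚ) - 1)) * fBplus l
    + (Polynomial.C (((l : ℚ) + 1) / (2 * (l : ℚ) - 1)) - Polynomial.X) * fBplus (l - 1)
    = Polynomial.C (((l : ℚ) - 2) / (2 * (l : ℚ) - 1)) * fBplus l
      + Polynomial.C (((l : ℚ) + 1) / (2 * (l : ℚ) - 1)) * fBplus (l-1)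
      - Polynomial.X * fBplus (l - 1) from by ring]
  rw [show Polynomial.C (1 / (2 * ((l : ℚ) - 1))) *
          (Polynomial.C (l : ℚ) * Polynomial.X - Polynomial.C (2:ℚ)) * fB l
        + Polynomial.C (1 / (2 * ((l : ℚ) - 1))) *
          (Polynomial.C (2 * (2 * (l : ℚ) - 1)) * Polynomial.X ^ 2
            - Polynomial.C (5 * (l : ℚ)) * Polynomial.X + Polynomial.C (2 * (l : ℚ))) *
          fB (l - 1)
    = Polynomial.C (1 / (2 * ((l : ℚ) - 1))) * Polynomial.C (l:ℚ) * (Polynomial.X * fB l)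
      - Polynomial.C (1 / (2 * ((l : ℚ) - 1))) * Polynomial.C (2:ℚ) * fB l
      + Polynomial.C (1 / (2 * ((l : ℚ) - 1))) * Polynomial.C (2 * (2 * (l : ℚ) - 1)) * (Polynomial.X ^ 2 * fB (l-1))
      - Polynomial.C (1 / (2 * ((l : ℚ) - 1))) * Polynomial.C (5 * (l : ℚ)) * (Polynomial.X * fB (l-1))
      + Polynomial.C (1 / (2 * ((l : ℚ) - 1))) * Polynomial.C (2 * (l : ℚ)) * fB (l-1) from by ring]
  ext n
  simp only [Polynomial.coeff_add, Polynomial.coeff_sub, mul_assoc, Polynomial.coeff_C_mul,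
    pow_two]
  match n with
  | 0 =>
    simp only [Polynomial.mul_coeff_zero, Polynomial.coeff_X_zero, zero_mul, mul_zero,
      Polynomial.coeff_C_zero, coeff_fB, coeff_fBplus, Nat.choose_zero_right, Nat.cast_one,
      pow_zero]
    norm_num
    have hh : (-2 + (l:ℚ)*2) ≠ 0 := by intro h; linarith
    field_simp [hh]
    rw [div_eq_div_iff (by intro h; linarith) (by intro h; linarith)]
    ring
  | 1 =>
    rw [show (1:ℕ) = 0 + 1 from rfl]
    simp only [Polynomial.coeff_X_mul, Polynomial.mul_coeff_zero, Polynomial.coeff_X_zero,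
      zero_mul, mul_zero, coeff_fB, coeff_fBplus]
    have h1l : (1:ℕ) ≤ l := by omega
    simp only [Nat.zero_add]
    simp only [show l+1-1 = l by omega, show l-1+1-1 = l-1 by omega,
      show l-1+1 = l by omega,
      show l+0 = l by omega, show l-1+0 = l-1 by omega, show l-1+0-1 = l-2 by omega]
    simp only [Nat.choose_zero_right, Nat.choose_one_right, Nat.cast_one]
    rw [Nat.cast_sub h1l]
    push_cast
    have e1 : (l:ℚ)*2 - 1 ≠ 0 := by intro h; linarith
    have e2 : (l:ℚ) - 1 ≠ 0 := by intro h; linarith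
    field_simp
    ring
  | (k+2) =>
    rw [show k+2 = (k+1) + 1 from rfl]
    simp only [Polynomial.coeff_X_mul, coeff_fB, coeff_fBplus]
    simp only [show k+1+1 = k+2 from rfl]
    by_cases hg : k+3 ≤ l
    · obtain ⟨j, rfl⟩ : ∃ j, l = k+3+j := ⟨l-(k+3), by omega⟩
      simp only [show k+3+j = k+j+3 by omega]
      simp only [show k+j+3-1 = k+j+2 by omega,
        show k+j+3+(k+2)-1 = 2*k+j+4 by omega, show k+j+2+(k+2)-1 = 2*k+j+3 by omega,
        show k+j+2+(k+1)-1 = 2*k+j+2 by omega, show k+j+3+(k+1) = 2*k+j+4 by omega,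
        show k+j+3+(k+2) = 2*k+j+5 by omega, show k+j+2+k = 2*k+j+2 by omega,
        show k+j+2+(k+1) = 2*k+j+3 by omega, show k+j+2+(k+2) = 2*k+j+4 by omega]
      push_cast
      linear_combination key_gen k j
    · by_cases he : l = k+2
      · subst he
        simp only [show k+2-1 = k+1 from rfl]
        simp only [show k+2+(k+2)-1 = 2*k+3 by omega, show k+1+(k+2)-1 = 2*k+2 by omega,
          show k+1+(k+1)-1 = 2*k+1 by omega, show k+2+(k+1) = 2*k+3 by omega,
          show k+2+(k+2) = 2*k+4 by omega, show k+1+k = 2*k+1 by omega,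
          show k+1+(k+1) = 2*k+2 by omega, show k+1+(k+2) = 2*k+3 by omega]
        push_cast
        linear_combination key_l k
      · by_cases he1 : l = k+1
        · subst he1
          simp only [show k+1-1 = k from rfl]
          simp only [show k+1+(k+2)-1 = 2*k+2 by omega, show k+(k+2)-1 = 2*k+1 by omega,
            show k+(k+1)-1 = 2*k by omega, show k+1+(k+1) = 2*k+2 by omega,
            show k+1+(k+2) = 2*k+3 by omega, show k+k = 2*k by omega,
            show k+(k+1) = 2*k+1 by omega, show k+(k+2) = 2*k+2 by omega]
          rw [show ((k+1).choose (k+2)) = 0 from Nat.choose_eq_zero_of_lt (by omega),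
              show (k.choose (k+2)) = 0 from Nat.choose_eq_zero_of_lt (by omega),
              show (k.choose (k+1)) = 0 from Nat.choose_eq_zero_of_lt (by omega),
              Nat.choose_self, Nat.choose_self]
          have Hn : (k+1) * ((2*k+2).choose (k+1)) = 2*(2*k+1) * ((2*k).choose k) := by
            have h := Nat.succ_mul_centralBinom_succ k
            unfold Nat.centralBinom at h
            rw [show 2*(k+1) = 2*k+2 by ring] at h
            exact h
          have Hc : ((k:ℚ)+1) * ((2*k+2).choose (k+1) : ℚ)
              = 2*(2*(k:ℚ)+1) * ((2*k).choose k : ℚ) := by exact_mod_cast Hn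
          have hk4 : (4:ℕ) ≤ k := by omega
          have hkq : (k:ℚ) ≠ 0 := by
            have : (4:ℚ) ≤ (k:ℚ) := by exact_mod_cast hk4
            intro h; linarith
          push_cast
          have e1 : ((k:ℚ)+1)*2 - 1 ≠ 0 := by intro h; linarith
          have e2 : (k:ℚ)+1 - 1 ≠ 0 := by intro h; apply hkq; linarith
          field_simp
          linear_combination ((-1:ℚ)^k) * (1 + 2*(k:ℚ)) * Hc
        · have h4 : l ≤ k := by omega
          rw [Nat.choose_eq_zero_of_lt (show l < k+2 by omega),
            Nat.choose_eq_zero_of_lt (show l-1 < k+2 by omega),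
            Nat.choose_eq_zero_of_lt (show l-1 < k+1 by omega),
            Nat.choose_eq_zero_of_lt (show l < k+1 by omega),
            Nat.choose_eq_zero_of_lt (show l-1 < k by omega)]
          push_cast
          ring
end
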